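/- For non-negative integers x, y, z with 2x + y + z = g, the matrix (−1)·(W(x,y,z) ⊕ ᵗW(x,y,z)) is conjugate in Sp(2g, ℤ) to W(x,z,y) ⊕ ᵗW(x,z,y). -/

import Mathlib

open Matrix

/-- `W(x,y,z)` as a `g × g` integer matrix: block diagonal sum of `x` copies of
`J₁ = [[1,0],[1,-1]]`, followed by `-I_y` and `I_z` (with `z = g - 2x - y`). -/
def Wmat (g x y : ℕ) : Matrix (Fin g) (Fin g) ℤ :=
  Matrix.of fun i j =>
    if (i : ℕ) < 2 * x then
      (if (i : ℕ) = (j : ℕ) then (if (i : ℕ) % 2 = 0 then 1 else -1)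
       else if (i : ℕ) = (j : ℕ) + 1 ∧ (i : ℕ) % 2 = 1 then 1 else 0)
    else if (i : ℕ) = (j : ℕ) then (if (i : ℕ) < 2 * x + y then -1 else 1) else 0

/-- The standard symplectic form matrix `J = [[0, I_g],[-I_g, 0]]`. -/
def Jstd (g : ℕ) : Matrix (Fin g ⊕ Fin g) (Fin g ⊕ Fin g) ℤ :=
  Matrix.fromBlocks 0 1 (-1) 0

/-!
Already in `GL_g(ℤ)`, `-W(x,y,z)` is conjugate to `W(x,z,y)` by `P = P₂ ⊕ ⋯ ⊕ P₂ ⊕ S`, where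
`P₂ = [[1,-2],[0,-1]]` is an involution with `-J₁ P₂ = P₂ J₁`, and `S` is the permutation matrix
carrying the block `I_y` of `-W(x,y,z)` onto the block `I_y` of `W(x,z,y)`, and `-I_z` onto `-I_z`.
The inverse of `P` is the same matrix with `y` and `z` exchanged. Finally, for any `P ∈ GL_g`,
`E = diag(P, P⁻ᵀ)` is symplectic and conjugates `diag(A, Aᵀ)` to `diag(P⁻¹AP, (P⁻¹AP)ᵀ)`.
-/

section BlockDiagonal

variable {n R : Type*} [Fintype n] [DecidableEq n] [CommRing R] {A B P Q : Matrix n n R}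

theorem fromBlocks_transpose_mul_J_mul (hQP : Q * P = 1) :
    (fromBlocks P 0 0 Qᵀ)ᵀ * fromBlocks 0 1 (-1) 0 * fromBlocks P 0 0 Qᵀ =
      (fromBlocks 0 1 (-1) 0 : Matrix (n ⊕ n) (n ⊕ n) R) := by
  simp [fromBlocks_transpose, fromBlocks_multiply, ← transpose_mul, hQP]

theorem fromBlocks_mul_fromBlocks_of_mul_eq_one (hPQ : P * Q = 1) :
    fromBlocks P 0 0 Qᵀ * fromBlocks Q 0 0 Pᵀ = 1 := by
  simp [fromBlocks_multiply, ← transpose_mul, hPQ]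

theorem exists_symplectic_conj_fromBlocks (hPQ : P * Q = 1) (hAB : A * P = P * B) :
    ∃ E : Matrix (n ⊕ n) (n ⊕ n) R, Eᵀ * fromBlocks 0 1 (-1) 0 * E = fromBlocks 0 1 (-1) 0 ∧
      IsUnit E ∧ E⁻¹ * fromBlocks A 0 0 Aᵀ * E = fromBlocks B 0 0 Bᵀ := by
  have hQP := mul_eq_one_comm.mp hPQ
  have hinv := fromBlocks_mul_fromBlocks_of_mul_eq_one hPQ
  have hconj : Q * A * P = B := by rw [mul_assoc, hAB, ← mul_assoc, hQP, one_mul]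
  refine ⟨_, fromBlocks_transpose_mul_J_mul hQP, .of_mul_eq_one _ hinv, ?_⟩
  rw [inv_eq_right_inv hinv, fromBlocks_multiply, fromBlocks_multiply, ← hconj]
  simp [mul_assoc]

end BlockDiagonal

section ConjugatingMatrix

variable {g x y z : ℕ}

theorem sum_Wmat_mul (m : ℕ → ℤ) (i : Fin g) :
    ∑ k, Wmat g x y i k * m k =
      if (i : ℕ) < 2 * x then (if (i : ℕ) % 2 = 0 then m i else m (i - 1) - m i)
      else if (i : ℕ) < 2 * x + y then -m i else m i := by
  have hi := i.isLt
  by_cases hodd : (i : ℕ) < 2 * x ∧ (i : ℕ) % 2 = 1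
  · rw [Fintype.sum_eq_add ⟨i - 1, by omega⟩ i (by simp [Fin.ext_iff]; omega)]
    · simp only [Wmat, of_apply]; split_ifs <;> omega
    · rintro k ⟨hk1, hk2⟩
      simp only [Wmat, of_apply, Fin.ext_iff, ne_eq] at hk1 hk2 ⊢
      split_ifs <;> omega
  · rw [Fintype.sum_eq_single i]
    · simp only [Wmat, of_apply]; split_ifs <;> omega
    · intro k hk
      simp only [Wmat, of_apply, Fin.ext_iff, ne_eq] at hk ⊢
      split_ifs <;> omega

theorem sum_mul_Wmat (hx : 2 * x ≤ g) (m : ℕ → ℤ) (j : Fin g) :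
    ∑ k : Fin g, m k * Wmat g x y k j =
      if (j : ℕ) < 2 * x then (if (j : ℕ) % 2 = 0 then m j + m (j + 1) else -m j)
      else if (j : ℕ) < 2 * x + y then -m j else m j := by
  by_cases heven : (j : ℕ) < 2 * x ∧ (j : ℕ) % 2 = 0
  · rw [Fintype.sum_eq_add j ⟨j + 1, by omega⟩ (by simp [Fin.ext_iff])]
    · simp only [Wmat, of_apply, true_and]; split_ifs <;> omega
    · rintro k ⟨hk1, hk2⟩
      simp only [Wmat, of_apply, Fin.ext_iff, ne_eq] at hk1 hk2 ⊢
      split_ifs <;> omega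
  · rw [Fintype.sum_eq_single j]
    · simp only [Wmat, of_apply]; split_ifs <;> omega
    · intro k hk
      simp only [Wmat, of_apply, Fin.ext_iff, ne_eq] at hk ⊢
      split_ifs <;> omega

-- The matrix `P` above: `x` copies of `P₂` on `[0, 2x)`, then the permutation `S`.
def pEntry (x y z i j : ℕ) : ℤ :=
  if i < 2 * x then
    (if i = j then (if i % 2 = 0 then 1 else -1) else if i % 2 = 0 ∧ j = i + 1 then -2 else 0)
  else if i < 2 * x + y then (if j = i + z then 1 else 0)
  else (if i = j + y then 1 else 0)

def Pmat (g x y z : ℕ) : Matrix (Fin g) (Fin g) ℤ :=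
  of fun i j => pEntry x y z i j

theorem Pmat_apply (i j : Fin g) : Pmat g x y z i j = pEntry x y z i j := rfl

theorem sum_pEntry_mul (h : 2 * x + y + z = g) (m : ℕ → ℤ) (i : Fin g) :
    ∑ k : Fin g, pEntry x y z i k * m k =
      if (i : ℕ) < 2 * x then (if (i : ℕ) % 2 = 0 then m i - 2 * m (i + 1) else -m i)
      else if (i : ℕ) < 2 * x + y then m (i + z) else m (i - y) := by
  have hi := i.isLt
  by_cases heven : (i : ℕ) < 2 * x ∧ (i : ℕ) % 2 = 0
  · rw [Fintype.sum_eq_add i ⟨i + 1, by omega⟩ (by simp [Fin.ext_iff])]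
    · simp only [pEntry, and_true]; split_ifs <;> omega
    · rintro k ⟨hk1, hk2⟩
      simp only [pEntry, Fin.ext_iff, ne_eq] at hk1 hk2 ⊢
      split_ifs <;> omega
  · have hpartner : (if (i : ℕ) < 2 * x then (i : ℕ) else if (i : ℕ) < 2 * x + y then i + z
        else i - y) < g := by split_ifs <;> omega
    rw [Fintype.sum_eq_single ⟨_, hpartner⟩]
    · simp only [pEntry]; split_ifs <;> omega
    · intro k hk
      simp only [pEntry, Fin.ext_iff, ne_eq] at hk ⊢
      split_ifs at hk ⊢ <;> omega

theorem Pmat_mul_Pmat (h : 2 * x + y + z = g) : Pmat g x y z * Pmat g x z y = 1 := by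
  ext i j
  simp only [mul_apply, Pmat_apply]
  rw [sum_pEntry_mul h (fun k => pEntry x z y k j)]
  simp only [one_apply, Fin.ext_iff, pEntry]
  split_ifs <;> omega

theorem neg_Wmat_mul_Pmat (h : 2 * x + y + z = g) :
    -Wmat g x y * Pmat g x y z = Pmat g x y z * Wmat g x z := by
  ext i j
  rw [neg_mul, neg_apply, mul_apply, mul_apply]
  simp only [Pmat_apply]
  rw [sum_Wmat_mul (fun k => pEntry x y z k j), sum_mul_Wmat (by omega) (fun k => pEntry x y z i k)]
  simp only [pEntry]
  split_ifs <;> omega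

end ConjugatingMatrix

/-- For `2x + y + z = g`, the matrix `(-1) · (W(x,y,z) ⊕ ᵗW(x,y,z))` is conjugate
in `Sp(2g, ℤ)` to `W(x,z,y) ⊕ ᵗW(x,z,y)`. -/
theorem neg_R_conjugate (g x y z : ℕ) (h : 2 * x + y + z = g) :
    ∃ E : Matrix (Fin g ⊕ Fin g) (Fin g ⊕ Fin g) ℤ,
      Eᵀ * Jstd g * E = Jstd g ∧ IsUnit E ∧
      E⁻¹ * (-(Matrix.fromBlocks (Wmat g x y) 0 0 (Wmat g x y)ᵀ)) * E =
        Matrix.fromBlocks (Wmat g x z) 0 0 (Wmat g x z)ᵀ := by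
  simp only [fromBlocks_neg, neg_zero, ← transpose_neg]
  exact exists_symplectic_conj_fromBlocks (Pmat_mul_Pmat h) (neg_Wmat_mul_Pmat h)
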